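/- For any real matrices X, Y ∈ ℝ^{M×N}, the nuclear norm of Xᵀ Y equals the fidelity of the Gram matrices: ‖Xᵀ Y‖_* = Tr[((X Xᵀ)^{1/2} (Y Yᵀ) (X Xᵀ)^{1/2})^{1/2}]. -/

import Mathlib

open Matrix

lemma real_conjTranspose_eq {m n : ℕ} (A : Matrix (Fin m) (Fin n) ℝ) : Aᴴ = Aᵀ := rfl

lemma psd_tmul {m n : ℕ} (A : Matrix (Fin m) (Fin n) ℝ) : (Aᵀ * A).PosSemidef := by
  have h := Matrix.posSemidef_conjTranspose_mul_self A
  rwa [real_conjTranspose_eq] at h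

lemma psd_gram {m n : ℕ} (A : Matrix (Fin m) (Fin n) ℝ) : (A * Aᵀ).PosSemidef := by
  have h := Matrix.posSemidef_self_mul_conjTranspose A
  rwa [real_conjTranspose_eq] at h

namespace Matrix.PosSemidef

/-- The square root of a positive semidefinite matrix, as defined in the older Mathlib. -/
noncomputable def sqrt {n : Type*} [Fintype n] [DecidableEq n]
    {A : Matrix n n ℝ} (hA : A.PosSemidef) : Matrix n n ℝ :=
  hA.1.eigenvectorUnitary.1 * diagonal ((√·) ∘ hA.1.eigenvalues) *
  (star hA.1.eigenvectorUnitary : Matrix n n ℝ)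

lemma posSemidef_sqrt {n : Type*} [Fintype n] [DecidableEq n]
    {A : Matrix n n ℝ} (hA : A.PosSemidef) : PosSemidef hA.sqrt := by
  have hD : (diagonal (((√·) ∘ hA.1.eigenvalues) : n → ℝ)).PosSemidef := by
    rw [Matrix.posSemidef_diagonal_iff]
    intro i
    exact Real.sqrt_nonneg _
  have h := hD.mul_mul_conjTranspose_same hA.1.eigenvectorUnitary.1
  unfold sqrt
  simpa [Matrix.star_eq_conjTranspose] using h

end Matrix.PosSemidef

lemma psd_sand {M : ℕ} {Kx Ky : Matrix (Fin M) (Fin M) ℝ} (hx : Kx.PosSemidef) (hy : Ky.PosSemidef) :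
    (hx.sqrt * Ky * hx.sqrt).PosSemidef := by
  have h := hy.mul_mul_conjTranspose_same hx.sqrt
  rwa [hx.posSemidef_sqrt.isHermitian.eq] at h

/-- Nuclear norm: sum of singular values, i.e. `Tr[(AᵀA)^{1/2}]`. -/
noncomputable def nuclearNorm {m n : ℕ} (A : Matrix (Fin m) (Fin n) ℝ) : ℝ :=
  (Matrix.PosSemidef.sqrt (psd_tmul A)).trace

/-- Frobenius norm. -/
noncomputable def frobNorm {m n : ℕ} (A : Matrix (Fin m) (Fin n) ℝ) : ℝ :=
  Real.sqrt (Matrix.trace (Aᵀ * A))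

/-- Fidelity `Tr[(Kx^{1/2} Ky Kx^{1/2})^{1/2}]` between PSD matrices. -/
noncomputable def fidelity {M : ℕ} {Kx Ky : Matrix (Fin M) (Fin M) ℝ}
    (hx : Kx.PosSemidef) (hy : Ky.PosSemidef) : ℝ :=
  (Matrix.PosSemidef.sqrt (psd_sand hx hy)).trace


/-! Write `S = (X Xᵀ)^{1/2}`. Then `(Xᵀ Y)ᵀ (Xᵀ Y) = Yᵀ S² Y = (S Y)ᵀ (S Y)` and
`(S Y) (S Y)ᵀ = S (Y Yᵀ) S`, so it suffices that `Bᵀ B` and `B Bᵀ` have square roots of equal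
trace for every `B`. For `B` of size `m × n` we have `t^m χ_{Bᵀ B}(t) = t^n χ_{B Bᵀ}(t)`, so the
two matrices have the same nonzero eigenvalues, and the trace of a square root is the sum of the
square roots of the eigenvalues. -/

namespace Matrix.PosSemidef

open Polynomial

variable {n : Type*} [Fintype n] [DecidableEq n]

lemma sqrt_congr {A B : Matrix n n ℝ} (h : A = B) (hA : A.PosSemidef) (hB : B.PosSemidef) :
    hA.sqrt = hB.sqrt := by
  subst h; rfl

lemma sqrt_mul_sqrt {A : Matrix n n ℝ} (hA : A.PosSemidef) : hA.sqrt * hA.sqrt = A := by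
  set U : Matrix n n ℝ := hA.1.eigenvectorUnitary.1
  have hUU : star U * U = 1 := (mem_unitaryGroup_iff').mp hA.1.eigenvectorUnitary.2
  have hD : diagonal ((√·) ∘ hA.1.eigenvalues) * diagonal ((√·) ∘ hA.1.eigenvalues) =
      diagonal (RCLike.ofReal ∘ hA.1.eigenvalues) := by
    rw [diagonal_mul_diagonal]
    congr 1
    ext i
    exact Real.mul_self_sqrt (hA.eigenvalues_nonneg i)
  calc hA.sqrt * hA.sqrt
      = U * (diagonal ((√·) ∘ hA.1.eigenvalues) * (star U * U) *
          diagonal ((√·) ∘ hA.1.eigenvalues)) * star U := by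
        simp only [sqrt, U, Matrix.mul_assoc]
    _ = A := by
        rw [hUU, Matrix.mul_one, hD]
        exact (hA.1.spectral_theorem.trans (Unitary.conjStarAlgAut_apply _ _)).symm

lemma trace_sqrt {A : Matrix n n ℝ} (hA : A.PosSemidef) :
    hA.sqrt.trace = ∑ i, √(hA.1.eigenvalues i) := by
  rw [sqrt, trace_mul_cycle, (mem_unitaryGroup_iff').mp hA.1.eigenvectorUnitary.2,
    Matrix.one_mul, trace_diagonal]
  rfl

lemma trace_sqrt_eq_sum_sqrt_roots_charpoly {A : Matrix n n ℝ} (hA : A.PosSemidef) :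
    hA.sqrt.trace = (A.charpoly.roots.map Real.sqrt).sum := by
  rw [trace_sqrt, hA.1.roots_charpoly_eq_eigenvalues, Multiset.map_map]
  rfl

lemma trace_sqrt_eq_of_X_pow_mul_charpoly_eq {m : Type*} [Fintype m] [DecidableEq m]
    {A : Matrix m m ℝ} {B : Matrix n n ℝ} (hA : A.PosSemidef) (hB : B.PosSemidef) {k l : ℕ}
    (h : X ^ k * A.charpoly = X ^ l * B.charpoly) : hA.sqrt.trace = hB.sqrt.trace := by
  have hroots := congrArg (fun p : ℝ[X] => (p.roots.map Real.sqrt).sum) h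
  simp only [roots_mul (mul_ne_zero (pow_ne_zero _ X_ne_zero) (charpoly_monic _).ne_zero),
    roots_pow, roots_X, Multiset.map_add, Multiset.sum_add, Multiset.map_nsmul,
    Multiset.map_singleton, Real.sqrt_zero, Multiset.sum_nsmul, Multiset.sum_singleton,
    smul_zero, zero_add] at hroots
  rw [trace_sqrt_eq_sum_sqrt_roots_charpoly, trace_sqrt_eq_sum_sqrt_roots_charpoly, hroots]

end Matrix.PosSemidef

lemma trace_sqrt_transpose_mul_self_eq {m n : ℕ} (B : Matrix (Fin m) (Fin n) ℝ) :
    (psd_tmul B).sqrt.trace = (psd_gram B).sqrt.trace :=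
  (psd_tmul B).trace_sqrt_eq_of_X_pow_mul_charpoly_eq (psd_gram B) (by
    simpa only [Fintype.card_fin] using charpoly_mul_comm' Bᵀ B)

theorem nuclearNorm_eq_fidelity_of_grams (M N : ℕ) (X Y : Matrix (Fin M) (Fin N) ℝ) :
    nuclearNorm (Xᵀ * Y) = fidelity (psd_gram X) (psd_gram Y) := by
  set S := (psd_gram X).sqrt
  have hS : Sᵀ = S := (psd_gram X).posSemidef_sqrt.isHermitian
  have hSS : S * S = X * Xᵀ := (psd_gram X).sqrt_mul_sqrt
  have hXY : (Xᵀ * Y)ᵀ * (Xᵀ * Y) = (S * Y)ᵀ * (S * Y) := by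
    simp only [transpose_mul, transpose_transpose, hS, Matrix.mul_assoc, ← Matrix.mul_assoc S, hSS]
  have hSY : S * Y * (S * Y)ᵀ = S * (Y * Yᵀ) * S := by
    simp only [transpose_mul, hS, Matrix.mul_assoc]
  calc nuclearNorm (Xᵀ * Y)
      = (psd_tmul (S * Y)).sqrt.trace := congrArg trace (PosSemidef.sqrt_congr hXY _ _)
    _ = (psd_gram (S * Y)).sqrt.trace := trace_sqrt_transpose_mul_self_eq (S * Y)
    _ = fidelity (psd_gram X) (psd_gram Y) := congrArg trace (PosSemidef.sqrt_congr hSY _ _)
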